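/- arXiv:2208.07551 — 6 statements merged into one kernel-verified Lean document; each statement's English description precedes it below -/
import Mathlib

section
/- Let P, Q be polynomials over ℂ in l variables with coefficients in a subfield K of ℂ, and suppose r₁, ..., r_{l-1} are complex numbers algebraically independent over K. If the variable z₀ is free in the rational function P/Q (i.e., P/Q is not equal to any rational function of z₁,...,z_{l-1} only), then the one-variable rational function z ↦ P(z, r₁, ..., r_{l-1}) / Q(z, r₁, ..., r_{l-1}) is not constant. -/
/-!
Since `P` and `Q` have coefficients in `K`, expand them as polynomials `f, g` in `z₀` whose
coefficients lie in `K[z₁,…,z_{l-1}]`, on which evaluation at `r` is injective by algebraic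
independence. If `P/Q` were constantly `c` at `(z, r)`, the specialisations would satisfy
`f(r) = c · g(r)` (a polynomial identity in `z`, as it holds at infinitely many points), so every
cross product `f_k g_j - g_k f_j` vanishes at `r` and hence is zero. Taking `j = deg g` gives
`P · g_j = Q · f_j` with `g_j ≠ 0` free of `z₀`.
-/

open MvPolynomial
open scoped Polynomial

lemma MvPolynomial.exists_map_eq_of_coeff_mem {F σ : Type*} [Field F] {K : Subfield F}
    {p : MvPolynomial σ F} (hp : ∀ m, p.coeff m ∈ K) :
    ∃ p₀ : MvPolynomial σ K, map (algebraMap K F) p₀ = p := by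
  classical
  refine mem_range_map_iff_coeffs_subset.2 fun a ha => ?_
  obtain ⟨m, -, rfl⟩ := Finset.mem_image.1 ha
  exact ⟨⟨_, hp m⟩, rfl⟩

lemma MvPolynomial.finSuccEquiv_rename_succ {R : Type*} [CommSemiring R] {n : ℕ}
    (q : MvPolynomial (Fin n) R) : finSuccEquiv R n (rename Fin.succ q) = Polynomial.C q := by
  induction q using MvPolynomial.induction_on with
  | C a => simp [finSuccEquiv_apply]
  | add p q hp hq => simp [hp, hq]
  | mul_X p i hp => simp [hp, finSuccEquiv_X_succ]

lemma MvPolynomial.aeval_cons_eq_eval_map_finSuccEquiv {R S : Type*} [CommSemiring R]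
    [CommSemiring S] [Algebra R S] {n : ℕ} (z : S) (r : Fin n → S)
    (p : MvPolynomial (Fin (n + 1)) R) :
    aeval (Fin.cons z r) p = ((finSuccEquiv R n p).map (aeval r).toRingHom).eval z := by
  induction p using MvPolynomial.induction_on with
  | C a => simp [finSuccEquiv_apply]
  | add p q hp hq => simp [hp, hq]
  | mul_X p i hp =>
    cases i using Fin.cases <;> simp [hp, finSuccEquiv_X_succ, finSuccEquiv_X_zero]

lemma Polynomial.eq_C_mul_of_eval_div_eq {F : Type*} [Field F] [Infinite F] {p q : F[X]} {c : F}
    (hq : q ≠ 0) (h : ∀ z, q.eval z ≠ 0 → p.eval z / q.eval z = c) : p = C c * q := by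
  refine sub_eq_zero.1 (eq_zero_of_infinite_isRoot _ ?_)
  refine (finite_setOfPred_isRoot hq).infinite_compl.mono fun z hz => ?_
  have hqz : q.eval z ≠ 0 := hz
  simp [(div_eq_iff hqz).1 (h z hqz)]

lemma Polynomial.mul_C_coeff_eq_of_map_eq_C_mul {A B : Type*} [CommSemiring A] [CommSemiring B]
    {ψ : A →+* B} (hψ : Function.Injective ψ) {f g : A[X]} {c : B}
    (h : f.map ψ = C c * g.map ψ) (k : ℕ) : f * C (g.coeff k) = g * C (f.coeff k) := by
  have hk : ψ (f.coeff k) = c * ψ (g.coeff k) := by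
    simpa only [coeff_map, coeff_C_mul] using congrArg (coeff · k) h
  apply map_injective ψ hψ
  rw [Polynomial.map_mul, Polynomial.map_mul, map_C, map_C, h, hk, C_mul]
  ring

/-- If `z₀` is free in the rational function `P/Q` (with coefficients in a subfield
`K ⊆ ℂ`) and `r₁,…,r_{l}` are algebraically independent over `K`, then
`z ↦ P(z, r)/Q(z, r)` is not constant. -/
theorem stmt3 (l : ℕ) (K : Subfield ℂ)
    (P Q : MvPolynomial (Fin (l + 1)) ℂ)
    (hP : ∀ m, P.coeff m ∈ K) (hQc : ∀ m, Q.coeff m ∈ K) (hQ0 : Q ≠ 0)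
    (r : Fin l → ℂ) (hr : AlgebraicIndependent K r)
    (hfree : ¬∃ P' Q' : MvPolynomial (Fin l) ℂ,
      (∀ m, P'.coeff m ∈ K) ∧ (∀ m, Q'.coeff m ∈ K) ∧ Q' ≠ 0 ∧
      P * MvPolynomial.rename Fin.succ Q' = Q * MvPolynomial.rename Fin.succ P') :
    ¬∃ c : ℂ, ∀ z : ℂ, MvPolynomial.eval (Fin.cons z r) Q ≠ 0 →
      MvPolynomial.eval (Fin.cons z r) P / MvPolynomial.eval (Fin.cons z r) Q = c := by
  rintro ⟨c, hc⟩
  obtain ⟨P₀, rfl⟩ := exists_map_eq_of_coeff_mem hP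
  obtain ⟨Q₀, rfl⟩ := exists_map_eq_of_coeff_mem hQc
  set f := finSuccEquiv K l P₀
  set g := finSuccEquiv K l Q₀
  have hg : g ≠ 0 := (finSuccEquiv K l).map_ne_zero_iff.2 fun h => hQ0 (by rw [h, map_zero])
  have hspec : f.map (aeval r).toRingHom = Polynomial.C c * g.map (aeval r).toRingHom := by
    refine Polynomial.eq_C_mul_of_eval_div_eq ((Polynomial.map_ne_zero_iff hr).2 hg) fun z hz => ?_
    simp only [f, g, ← aeval_cons_eq_eval_map_finSuccEquiv, aeval_def] at hz ⊢
    simpa only [eval_map] using hc z (by simpa only [eval_map] using hz)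
  apply hfree
  refine ⟨map (algebraMap K ℂ) (f.coeff g.natDegree), map (algebraMap K ℂ) g.leadingCoeff,
    fun m => ?_, fun m => ?_, ?_, ?_⟩
  · rw [coeff_map]; exact SetLike.coe_mem _
  · rw [coeff_map]; exact SetLike.coe_mem _
  · exact (map_injective _ (algebraMap K ℂ).injective).ne_iff' (map_zero _) |>.2
      (Polynomial.leadingCoeff_ne_zero.2 hg)
  rw [← map_rename, ← map_rename, ← map_mul, ← map_mul]
  refine congrArg (map (algebraMap K ℂ)) ?_
  apply (finSuccEquiv K l).injective
  rw [map_mul, map_mul, finSuccEquiv_rename_succ, finSuccEquiv_rename_succ]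
  exact Polynomial.mul_C_coeff_eq_of_map_eq_C_mul hr hspec g.natDegree
end

section
/- Kronecker's approximation theorem (matrix form): Let A be a real m × n matrix such that the only rational vector z ∈ ℚ^m with Aᵀ z ∈ ℚ^n is z = 0. Then for every ε > 0 and every b₀, ..., b_{m−1} ∈ ℝ, there exist integers p₀, ..., p_{m−1} ∈ ℤ and an integer vector q ∈ ℤ^n such that |A_i q − p_i − b_i| < ε for all i < m, where A_i denotes the i-th row of A. -/
/-!
If the `ℤ`-span of the columns of `A` and the unit vectors `eᵢ` is dense in `ℝᵐ`, the
approximation is immediate. Otherwise its closure `H` is a proper closed subgroup. Let `V` be the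
largest subspace contained in `H`; a complement `W` of `V` meets `H` in a closed subgroup
containing no line, which is therefore discrete, i.e. a lattice in its span. A coordinate of a
lattice basis (or a functional killing the span, if it is proper), composed with the projection
onto `W`, is a nonzero functional `f` with `f(H) ⊆ ℤ`. The integers `zᵢ = f(eᵢ)` then satisfy
`(Aᵀz)ⱼ = f(colⱼ A) ∈ ℤ`, so `z = 0` and `f = 0`, a contradiction.
-/

open Filter Topology Submodule Module Matrix

theorem tendsto_floor_div_mul_nhdsGT_zero (t : ℝ) :
    Tendsto (fun r : ℝ => (⌊t / r⌋ : ℝ) * r) (𝓝[>] 0) (𝓝 t) := by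
  have hlower : Tendsto (fun r : ℝ => t - r) (𝓝[>] 0) (𝓝 t) :=
    ((continuous_sub_left t).tendsto' 0 t (sub_zero t)).mono_left nhdsWithin_le_nhds
  refine tendsto_of_tendsto_of_tendsto_of_le_of_le' hlower tendsto_const_nhds ?_ ?_
  all_goals filter_upwards [self_mem_nhdsWithin] with r (hr : 0 < r)
  · have := Int.lt_floor_add_one (t / r)
    rw [div_lt_iff₀ hr] at this
    linarith
  · exact (le_div_iff₀ hr).1 (Int.floor_le (t / r))

section Lineality

variable {E : Type*} [AddCommGroup E] [Module ℝ E]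

/-- The largest real subspace contained in the subgroup `H`. -/
def Submodule.lineality (H : Submodule ℤ E) : Submodule ℝ E where
  carrier := {x | ∀ t : ℝ, t • x ∈ H}
  add_mem' hx hy t := by simpa only [smul_add] using H.add_mem (hx t) (hy t)
  zero_mem' t := by simpa only [smul_zero] using H.zero_mem
  smul_mem' s x hx t := by simpa only [smul_smul] using hx (t * s)

theorem Submodule.mem_of_mem_lineality {H : Submodule ℤ E} {x : E} (hx : x ∈ H.lineality) :
    x ∈ H := by
  simpa using hx 1

end Lineality

section ClosedSubgroup

variable {E : Type*} [NormedAddCommGroup E] [NormedSpace ℝ E] [FiniteDimensional ℝ E]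

/- Normalised short vectors of `K` accumulate at a unit vector `x`, and integer multiples of
them approximate every point of the line `ℝ x`. -/
theorem discreteTopology_of_isClosed_of_smul_mem (K : Submodule ℤ E) (hK : IsClosed (K : Set E))
    (hline : ∀ x : E, (∀ t : ℝ, t • x ∈ K) → x = 0) : DiscreteTopology K := by
  rw [discreteTopology_iff_isOpen_singleton_zero, Metric.isOpen_singleton_iff]
  by_contra! hsmall
  choose k hk hk0 using fun n : ℕ => hsmall (1 / (n + 1)) Nat.one_div_pos_of_nat
  have hknorm : ∀ n, 0 < ‖(k n : E)‖ := fun n => norm_pos_iff.2 fun h => hk0 n (Subtype.ext h)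
  have hklim : Tendsto (fun n => ‖(k n : E)‖) atTop (𝓝 0) :=
    squeeze_zero (fun n => norm_nonneg _) (fun n => by simpa using (hk n).le)
      tendsto_one_div_add_atTop_nhds_zero_nat
  have hsphere : ∀ n, ‖(k n : E)‖⁻¹ • (k n : E) ∈ Metric.sphere (0 : E) 1 := fun n => by
    simp [norm_smul, (hknorm n).ne']
  obtain ⟨x, hx, φ, hφ, hux⟩ := (isCompact_sphere (0 : E) 1).tendsto_subseq hsphere
  suffices ∀ t : ℝ, t • x ∈ K by simp [hline x this] at hx
  intro t
  have hr : Tendsto (fun n => ‖(k (φ n) : E)‖) atTop (𝓝[>] 0) :=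
    tendsto_nhdsWithin_iff.2 ⟨hklim.comp hφ.tendsto_atTop, Eventually.of_forall fun n => hknorm _⟩
  have hw := ((tendsto_floor_div_mul_nhdsGT_zero t).comp hr).smul hux
  refine hK.mem_of_tendsto hw (Eventually.of_forall fun n => ?_)
  have hmul : ((⌊t / ‖(k (φ n) : E)‖⌋ : ℝ) * ‖(k (φ n) : E)‖) •
      (‖(k (φ n) : E)‖⁻¹ • (k (φ n) : E)) = ⌊t / ‖(k (φ n) : E)‖⌋ • (k (φ n) : E) := by
    rw [smul_smul, mul_assoc, mul_inv_cancel₀ (hknorm _).ne', mul_one, Int.cast_smul_eq_zsmul]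
  simp only [Function.comp_apply, hmul]
  exact zsmul_mem (k (φ n)).2 _

theorem exists_dual_ne_zero_forall_mem_int [Nontrivial E] (L : Submodule ℤ E)
    [DiscreteTopology L] : ∃ f : Dual ℝ E, f ≠ 0 ∧ ∀ x ∈ L, ∃ k : ℤ, f x = k := by
  by_cases hspan : span ℝ (L : Set E) = ⊤
  · have : IsZLattice ℝ L := ⟨hspan⟩
    have : Module.Free ℤ L := ZLattice.module_free ℝ L
    let b := (Free.chooseBasis ℤ L).ofZLatticeBasis ℝ L
    obtain ⟨i⟩ := b.index_nonempty
    refine ⟨b.coord i, fun h => by simpa using congr($h (b i)), fun x hx => ?_⟩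
    exact ⟨_, Basis.ofZLatticeBasis_repr_apply ℝ L _ ⟨x, hx⟩ i⟩
  · obtain ⟨f, hf0, hf⟩ :=
      exists_dual_map_eq_bot_of_lt_top (lt_top_iff_ne_top.2 hspan) inferInstance
    refine ⟨f, hf0, fun x hx => ⟨0, ?_⟩⟩
    simpa using LinearMap.le_ker_iff_map.2 hf (subset_span hx)

theorem exists_dual_ne_zero_forall_mem_int_of_isClosed (H : Submodule ℤ E)
    (hH : IsClosed (H : Set E)) (hne : H ≠ ⊤) :
    ∃ f : Dual ℝ E, f ≠ 0 ∧ ∀ x ∈ H, ∃ k : ℤ, f x = k := by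
  obtain ⟨W, hVW⟩ := H.lineality.exists_isCompl
  have hV : H.lineality ≠ ⊤ := fun h =>
    hne (eq_top_iff.2 fun x _ => mem_of_mem_lineality (h ▸ mem_top))
  have : Nontrivial W := nontrivial_iff_ne_bot.2 fun h => hV (eq_top_of_isCompl_bot (h ▸ hVW))
  let K : Submodule ℤ W := H.comap (W.subtype.restrictScalars ℤ)
  have : DiscreteTopology K := by
    refine discreteTopology_of_isClosed_of_smul_mem K (hH.preimage continuous_subtype_val)
      fun x hx => ?_
    have hxV : (x : E) ∈ H.lineality := fun t => hx t
    exact Subtype.ext (disjoint_def.1 hVW.disjoint _ hxV x.2)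
  obtain ⟨g, hg0, hg⟩ := exists_dual_ne_zero_forall_mem_int K
  let π := W.projectionOnto H.lineality hVW.symm
  refine ⟨g ∘ₗ π, fun h => hg0 (LinearMap.ext fun y => ?_), fun x hx => hg _ ?_⟩
  · simpa [π] using congr($h (y : E))
  · have hπx : (π x : E) = x - H.lineality.projection W hVW x :=
      eq_sub_of_add_eq' (projection_add_projection_eq_self hVW x)
    change (π x : E) ∈ H
    exact hπx ▸ H.sub_mem hx (mem_of_mem_lineality (projection_apply_mem _ _))

theorem dense_span_int_of_forall_dual {ι : Type*} (v : ι → E)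
    (hv : ∀ f : Dual ℝ E, (∀ i, ∃ k : ℤ, f (v i) = k) → f = 0) :
    Dense (span ℤ (Set.range v) : Set E) := by
  let H := (span ℤ (Set.range v)).topologicalClosure
  suffices H = ⊤ by simpa [H, dense_iff_closure_eq] using congr(($this : Set E))
  by_contra hne
  obtain ⟨f, hf0, hf⟩ := exists_dual_ne_zero_forall_mem_int_of_isClosed H
    (isClosed_topologicalClosure _) hne
  exact hf0 (hv f fun i => hf _ (le_topologicalClosure _ (subset_span ⟨i, rfl⟩)))

end ClosedSubgroup

namespace Matrix

variable {m n : ℕ}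

def colsAndSingles (A : Matrix (Fin m) (Fin n) ℝ) : Fin n ⊕ Fin m → (Fin m → ℝ) :=
  Sum.elim (fun j => Aᵀ j) (fun i => Pi.single i 1)

theorem exists_eq_of_mem_span_int_colsAndSingles (A : Matrix (Fin m) (Fin n) ℝ)
    {x : Fin m → ℝ} (hx : x ∈ span ℤ (Set.range A.colsAndSingles)) :
    ∃ (q : Fin n → ℤ) (p : Fin m → ℤ), x = A *ᵥ (fun j => (q j : ℝ)) + fun i => (p i : ℝ) := by
  obtain ⟨c, rfl⟩ := (mem_span_range_iff_exists_fun ℤ).1 hx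
  refine ⟨fun j => c (.inl j), fun i => c (.inr i), funext fun i => ?_⟩
  simp [Fintype.sum_sum_type, colsAndSingles, mulVec, dotProduct, Finset.sum_apply,
    Pi.single_apply, mul_comm]

theorem dual_eq_zero_of_forall_colsAndSingles_int (A : Matrix (Fin m) (Fin n) ℝ)
    (hA : ∀ z : Fin m → ℚ,
      (∀ j : Fin n, ∃ q : ℚ, A.transpose.mulVec (fun i => (z i : ℝ)) j = (q : ℝ)) → z = 0)
    (f : Dual ℝ (Fin m → ℝ)) (hf : ∀ k, ∃ z : ℤ, f (A.colsAndSingles k) = z) : f = 0 := by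
  choose z hz using hf
  have hf_apply : ∀ x, f x = ∑ i, x i * z (.inr i) := fun x => by
    conv_lhs => rw [pi_eq_sum_univ' x]
    simp [← hz, colsAndSingles]
  have hz0 : (fun i => (z (.inr i) : ℚ)) = 0 := hA _ fun j => ⟨z (.inl j), by
    push_cast
    rw [← hz, hf_apply]
    simp [colsAndSingles, mulVec, dotProduct]⟩
  have hzi : ∀ i, z (.inr i) = 0 := fun i => by simpa using congr_fun hz0 i
  exact LinearMap.ext fun x => by simp [hf_apply, hzi]

end Matrix

/-- Kronecker's approximation theorem in matrix form. -/
theorem stmt6 (m n : ℕ) (A : Matrix (Fin m) (Fin n) ℝ)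
    (hA : ∀ z : Fin m → ℚ,
      (∀ j : Fin n, ∃ q : ℚ, A.transpose.mulVec (fun i => (z i : ℝ)) j = (q : ℝ)) → z = 0) :
    ∀ ε : ℝ, 0 < ε → ∀ b : Fin m → ℝ,
      ∃ (p : Fin m → ℤ) (q : Fin n → ℤ),
        ∀ i : Fin m, |A.mulVec (fun j => (q j : ℝ)) i - p i - b i| < ε := by
  intro ε hε b
  have hdense := dense_span_int_of_forall_dual A.colsAndSingles
    (A.dual_eq_zero_of_forall_colsAndSingles_int hA)
  obtain ⟨x, hx, hbx⟩ := Metric.mem_closure_iff.1 (hdense b) ε hε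
  obtain ⟨q, p, hxqp⟩ := A.exists_eq_of_mem_span_int_colsAndSingles hx
  refine ⟨-p, q, fun i => ?_⟩
  calc |A.mulVec (fun j => (q j : ℝ)) i - ((-p i : ℤ) : ℝ) - b i|
      = dist (x i) (b i) := by simp [hxqp, Real.dist_eq, sub_eq_add_neg]
    _ ≤ dist x b := dist_le_pi_dist x b i
    _ < ε := by rwa [dist_comm]
end

section
/- Let θ₀,...,θ_{k−1} be real numbers such that 1, θ₀,...,θ_{k−1} are linearly independent over ℚ, and let O₀,...,O_{k−1} ⊆ (0,1) be non-empty open sets. Then there is a single natural number N such that for every s ∈ ℝ^k there exists m < N with frac(θ_i·m + s(i)) ∈ O_i for all i < k. -/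
open MeasureTheory Set Function Submodule Complex
open scoped Real

noncomputable section
namespace Stmt8

variable {k : ℕ}

abbrev G (k : ℕ) := Fin k → AddCircle (1 : ℝ)

lemma fourier_add_arg {T : ℝ} (m : ℤ) (a b : AddCircle T) :
    fourier m (a + b) = fourier m a * fourier m b := by
  simp_rw [fourier_apply, smul_add, AddCircle.toCircle_add, Circle.coe_mul]

def chr (n : Fin k → ℤ) : C(G k, ℂ) :=
  ∏ i : Fin k, (fourier (n i)).comp ⟨fun x => x i, continuous_apply i⟩

lemma chr_apply (n : Fin k → ℤ) (x : G k) : chr n x = ∏ i, fourier (n i) (x i) := by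
  simp [chr]

lemma chr_add_arg (n : Fin k → ℤ) (x y : G k) :
    chr n (x + y) = chr n x * chr n y := by
  simp_rw [chr_apply, Pi.add_apply, fourier_add_arg, Finset.prod_mul_distrib]

lemma chr_mul (m n : Fin k → ℤ) : chr m * chr n = chr (m + n) := by
  ext x
  simp_rw [ContinuousMap.mul_apply, chr_apply, Pi.add_apply, fourier_add,
    Finset.prod_mul_distrib]

lemma chr_zero : chr (0 : Fin k → ℤ) = 1 := by
  ext x
  simp [chr_apply, fourier_zero]

lemma star_chr (n : Fin k → ℤ) : star (chr n) = chr (-n) := by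
  ext x
  simp_rw [ContinuousMap.star_apply, chr_apply, Pi.neg_apply, fourier_neg]
  rw [star_prod]
  rfl


/-- The star subalgebra generated by the characters. -/
def chrAlg (k : ℕ) : StarSubalgebra ℂ C(G k, ℂ) where
  toSubalgebra := Algebra.adjoin ℂ (range (chr (k := k)))
  star_mem' := by
    show Algebra.adjoin ℂ (range (chr (k := k))) ≤
      star (Algebra.adjoin ℂ (range (chr (k := k))))
    refine Algebra.adjoin_le ?_
    rintro - ⟨n, rfl⟩
    exact Algebra.subset_adjoin ⟨-n, (star_chr n).symm⟩

theorem chrAlg_coe (k : ℕ) :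
    Subalgebra.toSubmodule (chrAlg k).toSubalgebra = span ℂ (range (chr (k := k))) := by
  apply Algebra.adjoin_eq_span_of_subset
  refine Subset.trans ?_ Submodule.subset_span
  intro x hx
  refine Submonoid.closure_induction (fun _ => id) ⟨0, chr_zero⟩ ?_ hx
  rintro - - - - ⟨m, rfl⟩ ⟨n, rfl⟩
  exact ⟨m + n, (chr_mul m n).symm⟩

theorem chrAlg_separatesPoints (k : ℕ) : (chrAlg k).SeparatesPoints := by
  intro x y hxy
  obtain ⟨i, hi⟩ : ∃ i, x i ≠ y i := by
    by_contra h
    push_neg at h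
    exact hxy (funext h)
  refine ⟨_, ⟨chr (Pi.single i 1), Algebra.subset_adjoin ⟨Pi.single i 1, rfl⟩, rfl⟩, ?_⟩
  dsimp only
  have key : ∀ z : G k, chr (Pi.single i 1) z = AddCircle.toCircle (z i) := by
    intro z
    rw [chr_apply, Finset.prod_eq_single i]
    · simp [Pi.single_apply, fourier_one]
    · intro j _ hj
      simp [Pi.single_apply, hj, fourier_zero]
    · simp
  rw [key, key]
  intro h
  rw [Circle.coe_inj] at h
  exact hi (AddCircle.injective_toCircle one_ne_zero h)

theorem span_chr_closure_eq_top (k : ℕ) :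
    (span ℂ (range (chr (k := k)))).topologicalClosure = ⊤ := by
  rw [← chrAlg_coe]
  exact congr_arg (Subalgebra.toSubmodule <| StarSubalgebra.toSubalgebra ·)
    (ContinuousMap.starSubalgebra_topologicalClosure_eq_top_of_separatesPoints
      (chrAlg k) (chrAlg_separatesPoints k))


lemma indep_rel {θ : Fin k → ℝ}
    (hθ : LinearIndependent ℚ (Fin.cons 1 θ : Fin (k + 1) → ℝ))
    (n : Fin k → ℤ) (z : ℤ) (h : ∑ i, (n i : ℝ) * θ i = z) : n = 0 := by
  have H := Fintype.linearIndependent_iff.mp hθ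
    (Fin.cons (-z : ℚ) (fun i => (n i : ℚ)))
  have h0 : ∑ j, ((Fin.cons (-z : ℚ) (fun i => (n i : ℚ)) : Fin (k + 1) → ℚ) j) • ((Fin.cons 1 θ : Fin (k + 1) → ℝ) j) = 0 := by
    rw [Fin.sum_univ_succ]
    simp only [Fin.cons_succ, Fin.cons_zero, Rat.smul_one_eq_cast]
    have : ∀ i, ((n i : ℚ)) • θ i = (n i : ℝ) * θ i := by
      intro i
      rw [Rat.smul_def]
      push_cast
      ring
    simp_rw [this, h]
    push_cast
    ring
  funext i
  have := H h0 i.succ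
  simpa using this

lemma chr_theta (θ : Fin k → ℝ) (n : Fin k → ℤ) :
    chr n (fun i => (θ i : AddCircle (1 : ℝ)))
      = Complex.exp (2 * π * Complex.I * (∑ i, (n i : ℝ) * θ i : ℝ)) := by
  rw [chr_apply]
  simp_rw [fourier_coe_apply]
  rw [← Complex.exp_sum]
  congr 1
  push_cast
  rw [Finset.mul_sum]
  congr 1
  funext i
  field_simp

lemma chr_theta_ne_one {θ : Fin k → ℝ}
    (hθ : LinearIndependent ℚ (Fin.cons 1 θ : Fin (k + 1) → ℝ))
    {n : Fin k → ℤ} (hn : n ≠ 0) :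
    chr n (fun i => (θ i : AddCircle (1 : ℝ))) ≠ 1 := by
  rw [chr_theta]
  intro h
  obtain ⟨z, hz⟩ := Complex.exp_eq_one_iff.mp h
  apply hn
  refine indep_rel hθ n z ?_
  have h2 : (2 * (π : ℂ) * Complex.I) ≠ 0 := by
    simp [Real.pi_ne_zero, Complex.I_ne_zero]
  have h3 : ((∑ i, (n i : ℝ) * θ i : ℝ) : ℂ) = (z : ℂ) :=
    mul_left_cancel₀ h2 (by linear_combination hz)
  exact_mod_cast h3


theorem dense_nsmul (θ : Fin k → ℝ)
    (hθ : LinearIndependent ℚ (Fin.cons 1 θ : Fin (k + 1) → ℝ)) :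
    DenseRange (fun m : ℕ => m • (fun i => (θ i : AddCircle (1 : ℝ)) : G k)) := by
  set θb : G k := fun i => (θ i : AddCircle (1 : ℝ)) with hθbdef
  rw [← denseRange_zsmul_iff_nsmul]
  set H : AddSubgroup (G k) := (AddSubgroup.zmultiples θb).topologicalClosure with hHdef
  have hrange : Set.range (fun m : ℤ => m • θb) = (AddSubgroup.zmultiples θb : Set (G k)) :=
    (AddSubgroup.coe_zmultiples θb).symm
  have hHc : IsClosed (H : Set (G k)) := AddSubgroup.isClosed_topologicalClosure _
  unfold DenseRange
  rw [hrange, dense_iff_closure_eq]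
  change closure ((AddSubgroup.zmultiples θb : Set (G k))) = univ
  by_contra hne
  have hclos : closure ((AddSubgroup.zmultiples θb : Set (G k))) = (H : Set (G k)) := rfl
  rw [hclos] at hne
  obtain ⟨x₀, hx₀⟩ := (ne_univ_iff_exists_notMem _).mp hne
  -- set up Haar measure on H
  borelize (G k)
  have hHcomp : IsCompact (H : Set (G k)) := hHc.isCompact
  haveI : CompactSpace H := isCompact_iff_compactSpace.mp hHcomp
  haveI : Nonempty H := ⟨0⟩
  borelize ↥H
  set K₀ : TopologicalSpace.PositiveCompacts H := ⊤ with hK₀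
  set μ : Measure H := Measure.addHaarMeasure K₀ with hμ
  haveI : IsProbabilityMeasure μ := ⟨by
    rw [hμ, ← TopologicalSpace.PositiveCompacts.coe_top (α := H)]
    exact Measure.addHaarMeasure_self⟩
  set ι : H → G k := Subtype.val with hι
  have hιc : Continuous ι := continuous_subtype_val
  set ν : Measure (G k) := Measure.map ι μ with hν
  haveI : IsProbabilityMeasure ν := Measure.isProbabilityMeasure_map hιc.aemeasurable
  -- basic integral identities
  have hmap : ∀ φ : G k → ℂ, Continuous φ → ∫ x, φ x ∂ν = ∫ a, φ (ι a) ∂μ := fun φ hφ =>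
    integral_map hιc.aemeasurable hφ.aestronglyMeasurable
  have hint : ∀ φ : G k → ℂ, Continuous φ → Integrable φ ν := fun φ hφ =>
    hφ.integrable_of_hasCompactSupport (HasCompactSupport.of_compactSpace φ)
  have hinv : ∀ (φ : G k → ℂ), Continuous φ → ∀ h ∈ H,
      ∫ x, φ (h + x) ∂ν = ∫ x, φ x ∂ν := by
    intro φ hφ h hh
    rw [hmap (fun x => φ (h + x)) (by fun_prop), hmap _ hφ]
    have : ∀ a : H, φ (h + ι a) = (fun b : H => φ (ι b)) (⟨h, hh⟩ + a) := fun a => rfl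
    simp_rw [this]
    exact integral_add_left_eq_self (fun b : H => φ (ι b)) (⟨h, hh⟩ : H)
  have hθbH : θb ∈ H := AddSubgroup.le_topologicalClosure _ (AddSubgroup.mem_zmultiples θb)
  -- character integrals vanish
  have hchr0 : ∀ n : Fin k → ℤ, n ≠ 0 → ∫ x, chr n x ∂ν = 0 := by
    intro n hn
    have h1 := hinv (chr n) (chr n).continuous θb hθbH
    have h2 : ∫ x, chr n (θb + x) ∂ν = chr n θb * ∫ x, chr n x ∂ν := by
      simp_rw [chr_add_arg]
      exact integral_const_mul _ _
    rw [h2] at h1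
    have h3 : (chr n θb - 1) * ∫ x, chr n x ∂ν = 0 := by ring_nf; linear_combination h1
    rcases mul_eq_zero.mp h3 with h | h
    · exact absurd (sub_eq_zero.mp h) (chr_theta_ne_one hθ hn)
    · exact h
  -- integrals against ν agree with integrals against its translate on the span
  have hspan : ∀ g ∈ span ℂ (range (chr (k := k))),
      ∫ x, g x ∂ν = ∫ x, g (x₀ + x) ∂ν := by
    intro g hg
    induction hg using Submodule.span_induction with
    | mem f hf =>
        obtain ⟨n, rfl⟩ := hf
        by_cases hn : n = 0
        · subst hn
          rw [chr_zero]
          simp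
        · have h1 : ∫ x, chr n (x₀ + x) ∂ν = chr n x₀ * ∫ x, chr n x ∂ν := by
            simp_rw [chr_add_arg]
            exact integral_const_mul _ _
          rw [h1, hchr0 n hn, mul_zero]
    | zero => simp
    | add f g' hf hg' ihf ihg =>
        simp only [ContinuousMap.add_apply]
        rw [integral_add (hint _ f.continuous) (hint _ g'.continuous),
          integral_add (hint (fun x => f (x₀ + x)) (by fun_prop))
            (hint (fun x => g' (x₀ + x)) (by fun_prop)), ihf, ihg]
    | smul c f hf ih =>
        simp only [ContinuousMap.smul_apply]
        rw [integral_smul, integral_smul, ih]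
  -- a Urysohn function separating H from x₀ + H
  have hclosed_t : IsClosed ((fun y => x₀ + y) '' (H : Set (G k))) :=
    (Homeomorph.addLeft x₀).isClosedMap _ hHc
  have hdisj : Disjoint (H : Set (G k)) ((fun y => x₀ + y) '' (H : Set (G k))) := by
    rw [Set.disjoint_left]
    rintro a haH ⟨b, hbH, rfl⟩
    refine hx₀ ?_
    have := H.sub_mem haH hbH
    simpa using this
  obtain ⟨f, hf0, hf1, hf01⟩ :=
    exists_continuous_zero_one_of_isCompact' hHcomp hclosed_t hdisj
  set F : C(G k, ℂ) := ⟨fun x => (f x : ℂ), Complex.continuous_ofReal.comp f.continuous⟩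
    with hFdef
  have hFν : ∫ x, F x ∂ν = 1 := by
    rw [hmap _ F.continuous]
    have : ∀ a : ↥H, F (ι a) = 1 := by
      intro a
      have := hf1 a.2
      simp only [hFdef, ContinuousMap.coe_mk]
      rw [show f (ι a) = 1 from this]
      norm_num
    simp_rw [this]
    simp
  have hFν' : ∫ x, F (x₀ + x) ∂ν = 0 := by
    rw [hmap (fun x => F (x₀ + x)) (by fun_prop)]
    have : ∀ a : ↥H, F (x₀ + ι a) = 0 := by
      intro a
      have := hf0 ⟨ι a, a.2, rfl⟩
      simp only [hFdef, ContinuousMap.coe_mk]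
      rw [show f (x₀ + ι a) = 0 from this]
      norm_num
    simp_rw [this]
    simp
  -- approximate F by an element of the span
  have hFc : (F : C(G k, ℂ)) ∈ closure ((span ℂ (range (chr (k := k)))) : Set C(G k, ℂ)) := by
    rw [← Submodule.topologicalClosure_coe, span_chr_closure_eq_top]
    trivial
  obtain ⟨g, hg, hdist⟩ := Metric.mem_closure_iff.mp hFc (1/4) (by norm_num)
  have bound : ∀ φ ψ : G k → ℂ, Continuous φ → Continuous ψ →
      (∀ x, ‖φ x - ψ x‖ ≤ 1/4) → ‖(∫ x, φ x ∂ν) - ∫ x, ψ x ∂ν‖ ≤ 1/4 := by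
    intro φ ψ hφ hψ hb
    rw [← integral_sub (hint _ hφ) (hint _ hψ)]
    have := norm_integral_le_of_norm_le_const (μ := ν) (f := fun x => φ x - ψ x)
      (C := 1/4) (Filter.Eventually.of_forall hb)
    simpa using this
  have hptw : ∀ x, ‖F x - g x‖ ≤ 1/4 := by
    intro x
    rw [← dist_eq_norm]
    exact le_trans (ContinuousMap.dist_apply_le_dist x) hdist.le
  have h1 : ‖(∫ x, F x ∂ν) - ∫ x, g x ∂ν‖ ≤ 1/4 :=
    bound _ _ F.continuous g.continuous hptw
  have h2 : ‖(∫ x, g (x₀ + x) ∂ν) - ∫ x, F (x₀ + x) ∂ν‖ ≤ 1/4 := by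
    refine bound _ _ (by fun_prop) (by fun_prop) ?_
    intro x
    rw [norm_sub_rev]
    exact hptw (x₀ + x)
  have hgeq := hspan g hg
  have e : (∫ x, F x ∂ν) - ∫ x, F (x₀ + x) ∂ν =
      ((∫ x, F x ∂ν) - ∫ x, g x ∂ν) +
        ((∫ x, g (x₀ + x) ∂ν) - ∫ x, F (x₀ + x) ∂ν) := by
    rw [← hgeq]
    ring
  have : (1 : ℝ) ≤ 1/2 := by
    calc (1 : ℝ) = ‖(∫ x, F x ∂ν) - ∫ x, F (x₀ + x) ∂ν‖ := by
          rw [hFν, hFν']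
          simp
    _ ≤ 1/4 + 1/4 := by
          rw [e]
          exact le_trans (norm_add_le _ _) (add_le_add h1 h2)
    _ = 1/2 := by norm_num
  norm_num at this

lemma fract_of_coe_eq {o r : ℝ} (ho : o ∈ Set.Ioo (0 : ℝ) 1)
    (h : (o : AddCircle (1 : ℝ)) = (r : AddCircle (1 : ℝ))) : Int.fract r = o := by
  rw [QuotientAddGroup.eq] at h
  obtain ⟨z, hz⟩ := h
  have hr : r = o + z := by
    have : (z : ℝ) = -o + r := by rw [← hz]; simp
    linarith
  rw [hr, Int.fract_add_intCast, Int.fract_eq_self.mpr ⟨ho.1.le, ho.2⟩]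

end Stmt8


/-- Uniform Kronecker: if `1, θ₀, …, θ_{k-1}` are linearly independent over `ℚ`
and `O_i ⊆ (0,1)` are non-empty open, then there is a single `N ∈ ℕ` such that for
every shift vector `s ∈ ℝ^k` some `m < N` satisfies `frac(θ_i·m + s_i) ∈ O_i`
for all `i`. -/
theorem stmt8 (k : ℕ) (θ : Fin k → ℝ)
    (hθ : LinearIndependent ℚ (Fin.cons 1 θ : Fin (k + 1) → ℝ))
    (t : Fin k → ℝ) (O : Fin k → Set ℝ)
    (hO : ∀ i, IsOpen (O i) ∧ (O i).Nonempty ∧ O i ⊆ Set.Ioo (0 : ℝ) 1) :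
    ∃ N : ℕ, ∀ s : Fin k → ℝ, ∃ m : ℕ, m < N ∧
      ∀ i, Int.fract (θ i * m + s i) ∈ O i := by

  classical
  set θb : Stmt8.G k := fun i => (θ i : AddCircle (1 : ℝ)) with hθb
  have hdense := Stmt8.dense_nsmul θ hθ
  set imO : Fin k → Set (AddCircle (1 : ℝ)) :=
    fun i => (fun r : ℝ => (r : AddCircle (1 : ℝ))) '' O i with himO
  have himO_open : ∀ i, IsOpen (imO i) :=
    fun i => QuotientAddGroup.isOpenMap_coe _ (hO i).1
  set V : ℕ → Set (Stmt8.G k) :=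
    fun m => {y | ∀ i, ((θ i * m : ℝ) : AddCircle (1 : ℝ)) + y i ∈ imO i} with hV
  have hVopen : ∀ m, IsOpen (V m) := by
    intro m
    have : V m = ⋂ i, (fun y : Stmt8.G k => ((θ i * m : ℝ) : AddCircle (1 : ℝ)) + y i) ⁻¹'
        imO i := by
      ext y; simp [hV]
    rw [this]
    exact isOpen_iInter_of_finite fun i =>
      (himO_open i).preimage (by fun_prop)
  have hcover : (Set.univ : Set (Stmt8.G k)) ⊆ ⋃ m : ℕ, V m := by
    intro y _
    set W : Set (Stmt8.G k) := {x | ∀ i, x i + y i ∈ imO i} with hW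
    have hWopen : IsOpen W := by
      have : W = ⋂ i, (fun x : Stmt8.G k => x i + y i) ⁻¹' imO i := by
        ext x; simp [hW]
      rw [this]
      exact isOpen_iInter_of_finite fun i =>
        (himO_open i).preimage ((continuous_apply i).add continuous_const)
    have hWne : W.Nonempty := by
      choose o ho using fun i => (hO i).2.1
      exact ⟨fun i => ((o i : ℝ) : AddCircle (1 : ℝ)) - y i,
        fun i => by simpa using ⟨o i, ho i, rfl⟩⟩
    obtain ⟨m, hm⟩ := hdense.exists_mem_open hWopen hWne
    refine Set.mem_iUnion.mpr ⟨m, fun i => ?_⟩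
    have hcoord : (m • θb) i = ((θ i * m : ℝ) : AddCircle (1 : ℝ)) := by
      have : (m • θb) i = m • ((θ i : AddCircle (1 : ℝ))) := rfl
      rw [this, ← AddCircle.coe_nsmul]
      congr 1
      push_cast
      ring
    have := hm i
    rwa [hcoord] at this
  obtain ⟨F, hF⟩ := isCompact_univ.elim_finite_subcover V hVopen hcover
  refine ⟨F.sup id + 1, fun s => ?_⟩
  have : (fun i => ((s i : ℝ) : AddCircle (1 : ℝ))) ∈ ⋃ m ∈ F, V m :=
    hF (Set.mem_univ _)
  obtain ⟨m, hmF, hmV⟩ := Set.mem_iUnion₂.mp this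
  refine ⟨m, Nat.lt_succ_of_le (Finset.le_sup (f := id) hmF), fun i => ?_⟩
  have h1 := hmV i
  rw [← AddCircle.coe_add] at h1
  obtain ⟨o, hoO, hoe⟩ := h1
  have := Stmt8.fract_of_coe_eq ((hO i).2.2 hoO) hoe
  rwa [this]
end
end

section
/- Let ⟨C_α : α < ω₁⟩ be a C-sequence and β a nonzero countable limit ordinal. Then the minimum of the lower trace L(α, β) tends to β as α tends to β from below; that is, for every γ < β there exists γ' < β such that for all α with γ' < α < β, min L(α, β) > γ. -/
/-! Once `α` passes an element `δ > γ` of `C β`, the first step of the walk from `β` down to `α`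
contributes `max (C β ∩ α) ≥ δ` to `L(α, β)` and discards everything below it. -/

open Ordinal Set

/-- The first uncountable ordinal. -/
noncomputable def omega1 : Ordinal := (Cardinal.aleph 1).ord

/-- `C` is a C-sequence: `C (α+1) = {α}` and, for nonzero countable limit `α`,
`C α` is a cofinal subset of `α` of order type `ω` (equivalently: infinite with
all proper initial segments finite). -/
def IsCSeq (C : Ordinal → Set Ordinal) : Prop :=
  (∀ α : Ordinal, C (α + 1) = {α}) ∧
  ∀ α : Ordinal, α < omega1 → Order.IsSuccLimit α →
    C α ⊆ Set.Iio α ∧ (∀ β < α, ∃ γ ∈ C α, β ≤ γ) ∧ (C α).Infinite ∧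
      ∀ β < α, (C α ∩ Set.Iio β).Finite

/-- `L` satisfies the defining recursion of the lower trace of the minimal walk:
`L(α,α) = ∅` and, for `α < β`,
`L(α,β) = (L(α, min(C_β \ α)) ∪ {max(C_β ∩ α)}) \ max(C_β ∩ α)`
(where the subtraction removes all ordinals below `max(C_β ∩ α)`). -/
def LowerTraceEqns (C : Ordinal → Set Ordinal) (L : Ordinal → Ordinal → Finset Ordinal) :
    Prop :=
  (∀ α : Ordinal, L α α = ∅) ∧
  (∀ α β : Ordinal, α < β → (C β ∩ Set.Iio α).Nonempty →
    (L α β : Set Ordinal) =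
      {ξ ∈ (L α (sInf (C β \ Set.Iio α)) : Set Ordinal) ∪ {sSup (C β ∩ Set.Iio α)} |
        sSup (C β ∩ Set.Iio α) ≤ ξ}) ∧
  (∀ α β : Ordinal, α < β → C β ∩ Set.Iio α = ∅ →
    L α β = L α (sInf (C β \ Set.Iio α)))

/-- `ρ` satisfies the defining recursion of the maximal weight `ρ₁`:
`ρ₁(α,α) = 0` and `ρ₁(α,β) = max(|C_β ∩ α|, ρ₁(α, min(C_β \ α)))` for `α < β`. -/
def Rho1Eqns (C : Ordinal → Set Ordinal) (ρ : Ordinal → Ordinal → ℕ) : Prop :=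
  (∀ α : Ordinal, ρ α α = 0) ∧
  ∀ α β : Ordinal, α < β →
    ρ α β = max (C β ∩ Set.Iio α).ncard (ρ α (sInf (C β \ Set.Iio α)))

theorem IsCSeq.exists_mem_gt {C : Ordinal → Set Ordinal} (hC : IsCSeq C) {β : Ordinal}
    (hβ1 : β < omega1) (hβ2 : Order.IsSuccLimit β) {γ : Ordinal} (hγ : γ < β) :
    ∃ δ ∈ C β, γ < δ ∧ δ < β := by
  obtain ⟨hsub, hcof, -, -⟩ := hC.2 β hβ1 hβ2
  obtain ⟨δ, hδC, hδ⟩ := hcof (Order.succ γ) (hβ2.succ_lt hγ)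
  exact ⟨δ, hδC, Order.succ_le_iff.mp hδ, hsub hδC⟩

namespace LowerTraceEqns

variable {C : Ordinal → Set Ordinal} {L : Ordinal → Ordinal → Finset Ordinal} {α β : Ordinal}

theorem sSup_mem (hL : LowerTraceEqns C L) (hαβ : α < β) (hne : (C β ∩ Iio α).Nonempty) :
    sSup (C β ∩ Iio α) ∈ L α β := by
  rw [← Finset.mem_coe, hL.2.1 α β hαβ hne]
  exact ⟨Or.inr rfl, le_rfl⟩

theorem sSup_le_of_mem (hL : LowerTraceEqns C L) (hαβ : α < β) (hne : (C β ∩ Iio α).Nonempty)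
    {ξ : Ordinal} (hξ : ξ ∈ L α β) : sSup (C β ∩ Iio α) ≤ ξ := by
  rw [← Finset.mem_coe, hL.2.1 α β hαβ hne] at hξ
  exact hξ.2

end LowerTraceEqns

/-- For a nonzero countable limit `β`, `min L(α, β) → β` as `α → β` from below. -/
theorem stmt12 (C : Ordinal → Set Ordinal) (hC : IsCSeq C)
    (L : Ordinal → Ordinal → Finset Ordinal) (hL : LowerTraceEqns C L)
    (β : Ordinal) (hβ1 : β < omega1) (hβ2 : Order.IsSuccLimit β) :
    ∀ γ < β, ∃ γ' < β, ∀ α : Ordinal, γ' < α → α < β →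
      (L α β).Nonempty ∧ ∀ ξ ∈ L α β, γ < ξ := by
  intro γ hγ
  obtain ⟨δ, hδC, hγδ, hδβ⟩ := hC.exists_mem_gt hβ1 hβ2 hγ
  refine ⟨δ, hδβ, fun α hδα hαβ => ?_⟩
  have hne : (C β ∩ Iio α).Nonempty := ⟨δ, hδC, hδα⟩
  have hγ_lt_sSup : γ < sSup (C β ∩ Iio α) :=
    hγδ.trans_le (le_csSup ⟨α, fun _ hx => hx.2.le⟩ ⟨hδC, hδα⟩)
  exact ⟨⟨_, hL.sSup_mem hαβ hne⟩,
    fun ξ hξ => hγ_lt_sSup.trans_le (hL.sSup_le_of_mem hαβ hne hξ)⟩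
end

section
/- The maximal weight function ρ₁ of a C-sequence is finite-to-one in each vertical section: for every β < ω₁ and every n < ω, the set {α < β : ρ₁(α, β) = n} is finite. -/
open Ordinal Set

theorem aux (C : Ordinal → Set Ordinal) (hC : IsCSeq C)
    (ρ : Ordinal → Ordinal → ℕ) (hρ : Rho1Eqns C ρ) :
    ∀ β : Ordinal, β < omega1 → ∀ n : ℕ,
      {α : Ordinal | α < β ∧ ρ α β ≤ n}.Finite := by
  intro β
  induction β using Ordinal.induction with
  | h β IH =>
  intro hβ n
  rcases Ordinal.zero_or_succ_or_isSuccLimit β with h0 | ⟨δ, hδ⟩ | hlim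
  · subst h0
    convert Set.finite_empty
    ext α; simp [not_lt_zero]
  · -- successor case
    rw [Order.succ_eq_add_one] at hδ
    subst hδ
    have hCβ : C (δ + 1) = {δ} := hC.1 δ
    have hδω : δ < omega1 := lt_trans (lt_add_one δ) hβ
    have key : {α : Ordinal | α < δ + 1 ∧ ρ α (δ + 1) ≤ n} ⊆
        insert δ {α : Ordinal | α < δ ∧ ρ α δ ≤ n} := by
      rintro α ⟨hαβ, hρα⟩
      have hαδ : α ≤ δ := Order.lt_add_one_iff.mp hαβ
      rcases eq_or_lt_of_le hαδ with rfl | hlt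
      · exact Set.mem_insert _ _
      · right
        have hempty : C (δ + 1) ∩ Set.Iio α = ∅ := by
          rw [hCβ]
          ext x; simp; rintro rfl; exact hαδ
        have hmin : sInf (C (δ + 1) \ Set.Iio α) = δ := by
          rw [hCβ]
          have : ({δ} : Set Ordinal) \ Set.Iio α = {δ} := by
            ext x; simp; rintro rfl; exact hαδ
          rw [this, csInf_singleton]
        have heq := hρ.2 α (δ + 1) hαβ
        rw [hempty, hmin] at heq
        simp only [Set.ncard_empty, Nat.zero_max] at heq
        rw [heq] at hρα
        exact ⟨hlt, hρα⟩
    exact ((IH δ (lt_add_one δ) hδω n).insert δ).subset key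
  · -- limit case
    obtain ⟨hsub, hcof, _, hfin⟩ := hC.2 β hβ hlim
    set D := C β with hD
    set F : Set Ordinal := {γ ∈ D | (D ∩ Set.Iio γ).ncard ≤ n} with hF
    have hFfin : F.Finite := by
      have hinj : Set.InjOn (fun γ => (D ∩ Set.Iio γ).ncard) F := by
        rintro γ₁ ⟨hγ₁, _⟩ γ₂ ⟨hγ₂, _⟩ heq
        by_contra hne
        rcases lt_or_gt_of_ne hne with hlt | hlt
        · have hss : D ∩ Set.Iio γ₁ ⊂ D ∩ Set.Iio γ₂ :=
            ⟨Set.inter_subset_inter_right D (Set.Iio_subset_Iio hlt.le),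
             fun hsub' => absurd (hsub' ⟨hγ₁, hlt⟩).2 (lt_irrefl γ₁)⟩
          exact absurd heq (ne_of_lt (Set.ncard_lt_ncard hss (hfin γ₂ (hsub hγ₂))))
        · have hss : D ∩ Set.Iio γ₂ ⊂ D ∩ Set.Iio γ₁ :=
            ⟨Set.inter_subset_inter_right D (Set.Iio_subset_Iio hlt.le),
             fun hsub' => absurd (hsub' ⟨hγ₂, hlt⟩).2 (lt_irrefl γ₂)⟩
          exact absurd heq.symm (ne_of_lt (Set.ncard_lt_ncard hss (hfin γ₁ (hsub hγ₁))))
      apply Set.Finite.of_finite_image _ hinj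
      apply (Set.finite_Iic n).subset
      rintro _ ⟨γ, hγ, rfl⟩
      exact hγ.2
    have key : {α : Ordinal | α < β ∧ ρ α β ≤ n} ⊆
        F ∪ ⋃ γ ∈ F, {α : Ordinal | α < γ ∧ ρ α γ ≤ n} := by
      rintro α ⟨hαβ, hρα⟩
      have hne : (D \ Set.Iio α).Nonempty := by
        obtain ⟨γ, hγ, hαγ⟩ := hcof α hαβ
        exact ⟨γ, hγ, not_lt.mpr hαγ⟩
      set γ := sInf (D \ Set.Iio α) with hγdef
      have hγmem : γ ∈ D \ Set.Iio α := csInf_mem hne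
      have hαγ : α ≤ γ := not_lt.mp hγmem.2
      have hrec := hρ.2 α β hαβ
      rw [← hD] at hrec
      have hcard : (D ∩ Set.Iio α).ncard ≤ n := by
        rw [hrec] at hρα; exact le_trans (le_max_left _ _) hρα
      have hργ : ρ α γ ≤ n := by
        rw [hrec] at hρα; exact le_trans (le_max_right _ _) hρα
      -- C_β ∩ Iio γ = C_β ∩ Iio α
      have hsame : D ∩ Set.Iio γ = D ∩ Set.Iio α := by
        ext x
        constructor
        · rintro ⟨hx, hxγ⟩
          refine ⟨hx, ?_⟩
          by_contra hxα
          exact absurd (csInf_le (OrderBot.bddBelow _) (show x ∈ D \ Set.Iio α from ⟨hx, hxα⟩)) (not_le.mpr hxγ)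
        · rintro ⟨hx, hxα⟩
          exact ⟨hx, lt_of_lt_of_le hxα hαγ⟩
      have hγF : γ ∈ F := ⟨hγmem.1, by rw [hsame]; exact hcard⟩
      rcases eq_or_lt_of_le hαγ with heq | hlt
      · exact Or.inl (heq ▸ hγF)
      · exact Or.inr (Set.mem_biUnion hγF
          (show α ∈ {α : Ordinal | α < γ ∧ ρ α γ ≤ n} from ⟨hlt, hργ⟩))
    have h2 : (⋃ γ ∈ F, {α : Ordinal | α < γ ∧ ρ α γ ≤ n}).Finite := by
      apply hFfin.biUnion
      intro γ hγF
      exact IH γ (hsub hγF.1) (lt_trans (hsub hγF.1) hβ) n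
    exact (hFfin.union h2).subset key


/-- `ρ₁` is finite-to-one in each vertical section. -/
theorem stmt14 (C : Ordinal → Set Ordinal) (hC : IsCSeq C)
    (ρ : Ordinal → Ordinal → ℕ) (hρ : Rho1Eqns C ρ)
    (β : Ordinal) (hβ : β < omega1) (n : ℕ) :
    {α : Ordinal | α < β ∧ ρ α β = n}.Finite := by
  apply (aux C hC ρ hρ β hβ n).subset
  rintro α ⟨h1, h2⟩
  exact ⟨h1, h2.le⟩
end

section
/- The maximal weight function ρ₁ of a C-sequence is coherent: for all α < β < ω₁, the set {ξ < α : ρ₁(ξ, α) ≠ ρ₁(ξ, β)} is finite. -/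
/-!
Everything is proved by induction on `β`, following the first step `c = min (C_β \ ξ)` of the
walk from `β` down to `ξ`, along which `ρ₁(ξ, β) = max(|C_β ∩ ξ|, ρ₁(ξ, c))`. As `C_β` has order
type at most `ω`, a bound `|C_β ∩ ξ| ≤ n` leaves only finitely many possible steps `c`, so the
fibres `{ξ < β | ρ₁(ξ, β) ≤ n}` are finite. For coherence of `α < β`, put `β' = min (C_β \ α)` and
`n = |C_β ∩ α|`. A `ξ < α` with `ρ₁(ξ, α) ≠ ρ₁(ξ, β)` either has `ρ₁(ξ, α) ≤ n`, or its first
step `c` lies in the finite set `C_β ∩ α` and `ξ` is `c` or a disagreement of `c` and `α`, or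
`c = β'` and `ξ` is a disagreement of `α` and `β'`.
-/

open Ordinal Set

theorem Set.finite_setOf_ncard_inter_Iio_le {α : Type*} [LinearOrder α] {S : Set α}
    (hS : ∀ c ∈ S, (S ∩ Iio c).Finite) (n : ℕ) :
    {c ∈ S | (S ∩ Iio c).ncard ≤ n}.Finite := by
  have hmono : StrictMonoOn (fun c => (S ∩ Iio c).ncard) S := by
    intro c hc d hd hcd
    refine Set.ncard_lt_ncard ?_ (hS d hd)
    refine (Set.ssubset_iff_of_subset ?_).2 ⟨c, ⟨hc, hcd⟩, fun h => lt_irrefl c h.2⟩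
    exact Set.inter_subset_inter_right S (Set.Iio_subset_Iio hcd.le)
  refine Set.Finite.of_injOn (t := Iic n) ?_ (hmono.injOn.mono fun c hc => hc.1) (Set.finite_Iic n)
  exact fun c hc => hc.2

/-- The first step `min (C β \ α)` of the walk from `β` down to `α`. -/
noncomputable def walkStep (C : Ordinal → Set Ordinal) (β α : Ordinal) : Ordinal :=
  sInf (C β \ Iio α)

section WalkStep

variable {C : Ordinal → Set Ordinal} {α β ξ : Ordinal}

theorem walkStep_mem_diff (h : (C β \ Iio α).Nonempty) : walkStep C β α ∈ C β \ Iio α :=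
  csInf_mem h

theorem walkStep_mem (h : (C β \ Iio α).Nonempty) : walkStep C β α ∈ C β :=
  (walkStep_mem_diff h).1

theorem le_walkStep (h : (C β \ Iio α).Nonempty) : α ≤ walkStep C β α :=
  not_lt.1 (walkStep_mem_diff h).2

theorem inter_Iio_walkStep (h : (C β \ Iio α).Nonempty) :
    C β ∩ Iio (walkStep C β α) = C β ∩ Iio α := by
  refine Set.Subset.antisymm ?_
    (Set.inter_subset_inter_right _ (Set.Iio_subset_Iio (le_walkStep h)))
  rintro x ⟨hxC, hx : x < walkStep C β α⟩
  refine ⟨hxC, Set.mem_Iio.2 (not_le.1 fun hαx => hx.not_ge ?_)⟩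
  exact csInf_le' ⟨hxC, not_lt.2 hαx⟩

theorem walkStep_eq_of_le_of_le (h : (C β \ Iio α).Nonempty) (hξα : ξ ≤ α)
    (hα : α ≤ walkStep C β ξ) : walkStep C β ξ = walkStep C β α := by
  have hξ : (C β \ Iio ξ).Nonempty :=
    h.mono (Set.sdiff_subset_sdiff_right (Set.Iio_subset_Iio hξα))
  refine le_antisymm (csInf_le' ⟨walkStep_mem h, ?_⟩) (csInf_le' ⟨walkStep_mem hξ, not_lt.2 hα⟩)
  exact not_lt.2 (hξα.trans (le_walkStep h))

end WalkStep

namespace IsCSeq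

variable {C : Ordinal → Set Ordinal} {β ξ : Ordinal}

theorem subset_Iio_and_sdiff_nonempty_and_inter_finite (hC : IsCSeq C) (hβ : β < omega1)
    (hξ : ξ < β) :
    C β ⊆ Iio β ∧ (C β \ Iio ξ).Nonempty ∧ (C β ∩ Iio ξ).Finite := by
  rcases Ordinal.zero_or_succ_or_isSuccLimit β with rfl | ⟨γ, rfl⟩ | hlim
  · exact absurd hξ not_lt_zero
  · rw [Order.succ_eq_add_one] at hξ ⊢
    rw [hC.1 γ]
    exact ⟨by simp, ⟨γ, rfl, not_lt.2 (Order.lt_add_one_iff.1 hξ)⟩, Set.toFinite _⟩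
  · obtain ⟨hsub, hcof, -, hfin⟩ := hC.2 β hβ hlim
    obtain ⟨γ, hγC, hξγ⟩ := hcof ξ hξ
    exact ⟨hsub, ⟨γ, hγC, not_lt.2 hξγ⟩, hfin ξ hξ⟩

end IsCSeq

section Rho

variable {C : Ordinal → Set Ordinal} {ρ : Ordinal → Ordinal → ℕ}

theorem finite_setOf_rho_le (hC : IsCSeq C) (hρ : Rho1Eqns C ρ) {β : Ordinal}
    (hβ : β < omega1) (n : ℕ) : {ξ | ξ < β ∧ ρ ξ β ≤ n}.Finite := by
  induction β using WellFoundedLT.induction with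
  | _ β ih =>
  rcases eq_or_ne β 0 with rfl | hβ0
  · simp
  have hsub := (hC.subset_Iio_and_sdiff_nonempty_and_inter_finite hβ (pos_iff_ne_zero.2 hβ0)).1
  set S := {c ∈ C β | (C β ∩ Iio c).ncard ≤ n}
  have hS : S.Finite := Set.finite_setOf_ncard_inter_Iio_le
    (fun c hc => (hC.subset_Iio_and_sdiff_nonempty_and_inter_finite hβ (hsub hc)).2.2) n
  -- `ξ` and its first step `c` have the same weight `|C β ∩ ξ| = |C β ∩ c|`.
  have hcover : {ξ | ξ < β ∧ ρ ξ β ≤ n} ⊆ S ∪ ⋃ c ∈ S, {ξ | ξ < c ∧ ρ ξ c ≤ n} := by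
    rintro ξ ⟨hξβ, hξn⟩
    have hne := (hC.subset_Iio_and_sdiff_nonempty_and_inter_finite hβ hξβ).2.1
    have hrec : ρ ξ β = max (C β ∩ Iio ξ).ncard (ρ ξ (walkStep C β ξ)) := hρ.2 ξ β hξβ
    have hcS : walkStep C β ξ ∈ S := by
      refine ⟨walkStep_mem hne, ?_⟩
      rw [inter_Iio_walkStep hne]
      omega
    rcases (le_walkStep hne).eq_or_lt with heq | hlt
    · exact Or.inl (heq ▸ hcS)
    · exact Or.inr (Set.mem_biUnion hcS ⟨hlt, by omega⟩)
  refine (hS.union (hS.biUnion fun c hc => ?_)).subset hcover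
  exact ih c (hsub hc.1) ((hsub hc.1).trans hβ)

theorem finite_setOf_rho_ne (hC : IsCSeq C) (hρ : Rho1Eqns C ρ) {α β : Ordinal}
    (hαβ : α ≤ β) (hβ : β < omega1) : {ξ | ξ < α ∧ ρ ξ α ≠ ρ ξ β}.Finite := by
  induction β using WellFoundedLT.induction generalizing α with
  | _ β ih =>
  rcases hαβ.eq_or_lt with rfl | hαβ
  · simp
  obtain ⟨hsub, hne, hfin⟩ := hC.subset_Iio_and_sdiff_nonempty_and_inter_finite hβ hαβ
  set β' := walkStep C β α
  set F := C β ∩ Iio α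
  have hβ'β : β' < β := hsub (walkStep_mem hne)
  have hcover : {ξ | ξ < α ∧ ρ ξ α ≠ ρ ξ β} ⊆ F ∪ {ξ | ξ < α ∧ ρ ξ α ≤ F.ncard} ∪
      {ξ | ξ < α ∧ ρ ξ α ≠ ρ ξ β'} ∪ ⋃ c ∈ F, {ξ | ξ < c ∧ ρ ξ c ≠ ρ ξ α} := by
    rintro ξ ⟨hξα, hξ⟩
    have hξne : (C β \ Iio ξ).Nonempty :=
      hne.mono (Set.sdiff_subset_sdiff_right (Set.Iio_subset_Iio hξα.le))
    set c := walkStep C β ξ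
    have hrec : ρ ξ β = max (C β ∩ Iio ξ).ncard (ρ ξ c) := hρ.2 ξ β (hξα.trans hαβ)
    have hweight : (C β ∩ Iio ξ).ncard ≤ F.ncard :=
      Set.ncard_le_ncard (Set.inter_subset_inter_right _ (Set.Iio_subset_Iio hξα.le)) hfin
    by_cases hagree : ρ ξ c = ρ ξ α
    · exact Or.inl (Or.inl (Or.inr ⟨hξα, by omega⟩))
    rcases lt_or_ge c α with hcα | hαc
    · have hcF : c ∈ F := ⟨walkStep_mem hξne, hcα⟩
      rcases (le_walkStep hξne).eq_or_lt with heq | hξc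
      · exact Or.inl (Or.inl (Or.inl (heq ▸ hcF)))
      · exact Or.inr (Set.mem_biUnion hcF ⟨hξc, hagree⟩)
    · have hcβ' : c = β' := walkStep_eq_of_le_of_le hne hξα.le hαc
      exact Or.inl (Or.inr ⟨hξα, fun h => hagree (hcβ' ▸ h.symm)⟩)
  refine (((hfin.union ?_).union ?_).union (hfin.biUnion fun c hc => ?_)).subset hcover
  · exact finite_setOf_rho_le hC hρ (hαβ.trans hβ) _
  · exact ih β' hβ'β (le_walkStep hne) (hβ'β.trans hβ)
  · exact ih α hαβ hc.2.le (hαβ.trans hβ)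

end Rho

/-- `ρ₁` is coherent: for `α < β < ω₁` the set of `ξ < α` where the two vertical
sections disagree is finite. -/
theorem stmt15 (C : Ordinal → Set Ordinal) (hC : IsCSeq C)
    (ρ : Ordinal → Ordinal → ℕ) (hρ : Rho1Eqns C ρ)
    (α β : Ordinal) (h1 : α < β) (h2 : β < omega1) :
    {ξ : Ordinal | ξ < α ∧ ρ ξ α ≠ ρ ξ β}.Finite := by
  exact finite_setOf_rho_ne hC hρ h1.le h2
end
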